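/- Fix ℓ > 0 and t₀ ∈ ℝ, and set C = exp(−π·e^{2t₀}/ℓ), so that 0 < C < 1. The image under Φ_ℓ of the set {(t,v,s) ∈ ℝ × ℂ × ℝ : t ≥ t₀} is exactly {(v,w) ∈ ℂ² : 0 < |w| ≤ C·exp(−π|v|²/ℓ)}. (This is the second assertion of Proposition 2.2 of the paper: projections of horoballs centered at the cusp point correspond to the subsets O_C of O.) -/

import Mathlib

/-- The cusp coordinate map `Φ_ℓ(t,v,s) = (v, exp(π(-e^{2t} - |v|² + 2is)/ℓ))`. -/
noncomputable def cuspΦ (ℓ t : ℝ) (v : ℂ) (s : ℝ) : ℂ × ℂ :=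
  (v, Complex.exp ((Real.pi : ℂ) *
        (-(Real.exp (2 * t) : ℂ) - ((‖v‖ : ℂ))^2 + 2 * Complex.I * (s : ℂ))
      / (ℓ : ℂ)))

/-!
On each fibre `v = const`, the second component of `Φ_ℓ` is polar coordinates on a punctured
disc: its modulus is `C(t) · exp(-π|v|²/ℓ)` with `C(t) = exp(-π e^{2t}/ℓ)`, and its argument
`2πs/ℓ` is arbitrary. Since `C` is a decreasing bijection of `ℝ` onto `(0,1)`, the horoball
`t ≥ t₀` is sent onto the moduli in `(0, C(t₀) · exp(-π|v|²/ℓ)]`.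
-/

open Real

noncomputable def horoballRadius (ℓ t : ℝ) : ℝ :=
  exp (-π * exp (2 * t) / ℓ)

namespace horoballRadius

variable {ℓ : ℝ}

theorem pos (t : ℝ) : 0 < horoballRadius ℓ t :=
  exp_pos _

theorem lt_one (hℓ : 0 < ℓ) (t : ℝ) : horoballRadius ℓ t < 1 :=
  exp_lt_one_iff.mpr <| div_neg_of_neg_of_pos
    (mul_neg_of_neg_of_pos (neg_neg_of_pos pi_pos) (exp_pos _)) hℓ

theorem antitone (hℓ : 0 < ℓ) : Antitone (horoballRadius ℓ) := fun t₀ t ht => by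
  refine exp_le_exp.mpr <| div_le_div_of_nonneg_right ?_ hℓ.le
  exact mul_le_mul_of_nonpos_left (exp_le_exp.mpr (by linarith)) (neg_nonpos.mpr pi_pos.le)

theorem exists_eq_of_le {t₀ r : ℝ} (hℓ : 0 < ℓ) (hr : 0 < r) (hle : r ≤ horoballRadius ℓ t₀) :
    ∃ t, t₀ ≤ t ∧ horoballRadius ℓ t = r := by
  -- Solve `exp(-π e^{2t}/ℓ) = r` for `e^{2t}`.
  set A := -ℓ * log r / π
  have hlog : log r ≤ -π * exp (2 * t₀) / ℓ := (log_le_iff_le_exp hr).mpr hle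
  have hA : exp (2 * t₀) ≤ A := by
    rw [le_div_iff₀ hℓ] at hlog
    rw [le_div_iff₀ pi_pos]
    linarith
  have hA_pos : 0 < A := (exp_pos _).trans_le hA
  refine ⟨log A / 2, ?_, ?_⟩
  · linarith [(le_log_iff_exp_le hA_pos).mpr hA]
  · rw [horoballRadius, mul_div_cancel₀ _ two_ne_zero, exp_log hA_pos,
      show -π * A / ℓ = log r by simp only [A]; field_simp, exp_log hr]

end horoballRadius

theorem cuspΦ_snd_eq (ℓ t : ℝ) (v : ℂ) (s : ℝ) :
    (cuspΦ ℓ t v s).2 = ((horoballRadius ℓ t * exp (-π * ‖v‖ ^ 2 / ℓ) : ℝ) : ℂ)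
      * Complex.exp ((2 * π * s / ℓ : ℝ) * Complex.I) := by
  simp only [cuspΦ, horoballRadius]
  push_cast
  rw [← Complex.exp_add, ← Complex.exp_add]
  ring_nf

theorem norm_cuspΦ_snd (ℓ t : ℝ) (v : ℂ) (s : ℝ) :
    ‖(cuspΦ ℓ t v s).2‖ = horoballRadius ℓ t * exp (-π * ‖v‖ ^ 2 / ℓ) := by
  rw [cuspΦ_snd_eq, norm_mul, Complex.norm_exp_ofReal_mul_I, mul_one, Complex.norm_real,
    norm_of_nonneg (mul_pos (horoballRadius.pos t) (exp_pos _)).le]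

theorem cuspΦ_eq_of_norm_eq {ℓ t : ℝ} (hℓ : ℓ ≠ 0) {v w : ℂ}
    (hw : horoballRadius ℓ t * exp (-π * ‖v‖ ^ 2 / ℓ) = ‖w‖) :
    cuspΦ ℓ t v (ℓ * Complex.arg w / (2 * π)) = (v, w) := by
  refine Prod.ext rfl ?_
  rw [cuspΦ_snd_eq, hw, show 2 * π * (ℓ * Complex.arg w / (2 * π)) / ℓ = Complex.arg w by
    field_simp]
  exact Complex.norm_mul_exp_arg_mul_I w

/-- Horoballs `{t ≥ t₀}` correspond to the subsets
`O_C = {(v,w) : 0 < |w| ≤ C·exp(-π|v|²/ℓ)}` with `C = exp(-π·e^{2t₀}/ℓ) ∈ (0,1)`. -/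
theorem cusp_chart_horoballs (ℓ t₀ : ℝ) (hℓ : 0 < ℓ) :
    0 < Real.exp (-Real.pi * Real.exp (2 * t₀) / ℓ)
    ∧ Real.exp (-Real.pi * Real.exp (2 * t₀) / ℓ) < 1
    ∧ (fun p : ℝ × ℂ × ℝ => cuspΦ ℓ p.1 p.2.1 p.2.2) '' {p : ℝ × ℂ × ℝ | t₀ ≤ p.1}
        = {q : ℂ × ℂ | 0 < ‖q.2‖ ∧
            ‖q.2‖ ≤ Real.exp (-Real.pi * Real.exp (2 * t₀) / ℓ) *
              Real.exp (-Real.pi * (‖q.1‖)^2 / ℓ)} := by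
  refine ⟨horoballRadius.pos t₀, horoballRadius.lt_one hℓ t₀, ?_⟩
  ext ⟨v, w⟩
  constructor
  · rintro ⟨⟨t, v, s⟩, ht, hΦ⟩
    rw [Set.mem_ofPred_eq, ← hΦ, norm_cuspΦ_snd]
    exact ⟨mul_pos (horoballRadius.pos t) (exp_pos _),
      mul_le_mul_of_nonneg_right (horoballRadius.antitone hℓ ht) (exp_nonneg _)⟩
  · rintro ⟨hw, hle⟩
    obtain ⟨t, ht, hrad⟩ := horoballRadius.exists_eq_of_le hℓ (div_pos hw (exp_pos _))
      ((div_le_iff₀ (exp_pos _)).mpr hle)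
    refine ⟨(t, v, ℓ * Complex.arg w / (2 * π)), ht, cuspΦ_eq_of_norm_eq hℓ.ne' ?_⟩
    rw [hrad, div_mul_cancel₀ _ (exp_pos _).ne']
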